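/- Let β ⊆ α be compositions with N = |α|−|β| ≥ 1. Then, as formal power series in the variables x_1, x_2, … with rational coefficients, Σ_{T ∈ SIT(α/β)} F_{comp(Des_{A*}(T))} = Σ_T x^T, where the right-hand sum runs over all fillings T of the cells of the skew diagram α/β with positive integers such that the entries in the cells of column 1 lying in α/β weakly increase from bottom to top and the entries of every row weakly increase from left to right. -/

import Mathlib

open scoped Classical

namespace ImmaculateSkew

/-- `part α i` is the `i`-th part (0-indexed) of the composition `α`, or `0` if out of range. -/
def part (α : List ℕ) (i : ℕ) : ℕ := α.getD i 0

/-- a composition: a list of positive integers -/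
def IsComposition (α : List ℕ) : Prop := ∀ x ∈ α, 0 < x

/-- `β ⊆ α` for compositions -/
def SubComp (β α : List ℕ) : Prop :=
  β.length ≤ α.length ∧ ∀ j < β.length, part β j ≤ part α j

/-- cell `(i, j)` (row `i` from the bottom, column `j`, both 0-indexed) lies in the diagram of `α` -/
def InDiagram (α : List ℕ) (c : ℕ × ℕ) : Prop :=
  c.1 < α.length ∧ c.2 < part α c.1

/-- cell lies in the skew diagram `α/β` -/
def InSkew (α β : List ℕ) (c : ℕ × ℕ) : Prop :=
  InDiagram α c ∧ ¬ InDiagram β c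

/-- the finite set of cells of the skew diagram `α/β` -/
noncomputable def skewCells (α β : List ℕ) : Finset (ℕ × ℕ) :=
  (Finset.range α.length ×ˢ Finset.range (α.sum + 1)).filter (InSkew α β)

/-- `N = |α| - |β|` -/
def skewSize (α β : List ℕ) : ℕ := α.sum - β.sum

/-- a filling of the cells of `α/β` using each entry of `E` exactly once, zero off the diagram -/
structure IsStdOn (α β : List ℕ) (E : Finset ℕ) (T : ℕ × ℕ → ℕ) : Prop where
  zero_off : ∀ c, ¬ InSkew α β c → T c = 0
  mem : ∀ c, InSkew α β c → T c ∈ E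
  inj : ∀ c c', InSkew α β c → InSkew α β c' → T c = T c' → c = c'
  surj : ∀ v ∈ E, ∃ c, InSkew α β c ∧ T c = v

/-- row entries strictly increase left to right -/
def RowsStrict (α β : List ℕ) (T : ℕ × ℕ → ℕ) : Prop :=
  ∀ i j j', j < j' → InSkew α β (i, j) → InSkew α β (i, j') → T (i, j) < T (i, j')

/-- row entries weakly increase left to right -/
def RowsWeak (α β : List ℕ) (T : ℕ × ℕ → ℕ) : Prop :=
  ∀ i j j', j < j' → InSkew α β (i, j) → InSkew α β (i, j') → T (i, j) ≤ T (i, j')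

/-- all column entries strictly increase bottom to top -/
def ColsStrict (α β : List ℕ) (T : ℕ × ℕ → ℕ) : Prop :=
  ∀ i i' j, i < i' → InSkew α β (i, j) → InSkew α β (i', j) → T (i, j) < T (i', j)

/-- all column entries weakly increase bottom to top -/
def ColsWeak (α β : List ℕ) (T : ℕ × ℕ → ℕ) : Prop :=
  ∀ i i' j, i < i' → InSkew α β (i, j) → InSkew α β (i', j) → T (i, j) ≤ T (i', j)

/-- the column-1 entries (those in `α/β`) strictly increase bottom to top -/
def FirstColStrict (α β : List ℕ) (T : ℕ × ℕ → ℕ) : Prop :=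
  ∀ i i', i < i' → InSkew α β (i, 0) → InSkew α β (i', 0) → T (i, 0) < T (i', 0)

/-- the column-1 entries (those in `α/β`) weakly increase bottom to top -/
def FirstColWeak (α β : List ℕ) (T : ℕ × ℕ → ℕ) : Prop :=
  ∀ i i', i < i' → InSkew α β (i, 0) → InSkew α β (i', 0) → T (i, 0) ≤ T (i', 0)

/-- standard immaculate tableau of shape `α/β` with entry set `E` -/
def IsSITOn (α β : List ℕ) (E : Finset ℕ) (T : ℕ × ℕ → ℕ) : Prop :=
  IsStdOn α β E T ∧ RowsStrict α β T ∧ FirstColStrict α β T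

/-- standard immaculate tableau of shape `α/β` (entries `1, …, N`) -/
def IsSIT (α β : List ℕ) (T : ℕ × ℕ → ℕ) : Prop :=
  IsSITOn α β (Finset.Icc 1 (skewSize α β)) T

/-- standard extended tableau: all columns increase bottom to top -/
def IsSET (α β : List ℕ) (T : ℕ × ℕ → ℕ) : Prop :=
  IsSIT α β T ∧ ColsStrict α β T

/-- the four descent-set variants -/
inductive Variant | dI | rdI | Astar | Abar

/-- `rowRel a r r'`: the relation required between the row `r` containing `i` and the row `r'`
containing `i+1` for `i` to be an `a`-descent -/
def rowRel : Variant → ℕ → ℕ → Prop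
  | .dI    => fun r r' => r < r'
  | .rdI   => fun r r' => r' ≤ r
  | .Astar => fun r r' => r' < r
  | .Abar  => fun r r' => r ≤ r'

/-- the `a`-descent set of a tableau -/
noncomputable def Des (a : Variant) (α β : List ℕ) (T : ℕ × ℕ → ℕ) : Finset ℕ :=
  (Finset.Icc 1 (skewSize α β - 1)).filter fun k =>
    ∃ c c', InSkew α β c ∧ InSkew α β c' ∧ T c = k ∧ T c' = k + 1 ∧ rowRel a c.1 c'.1

/-- interchange the entries `i` and `i+1` -/
def swapEntries (i : ℕ) (T : ℕ × ℕ → ℕ) : ℕ × ℕ → ℕ :=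
  fun c => if T c = i then i + 1 else if T c = i + 1 then i else T c

/-- the 0-Hecke operator `π_i^a` on `SIT(α/β) ∪ {0}` (the zero function plays the role of `0`) -/
noncomputable def piOp (a : Variant) (α β : List ℕ) (i : ℕ) (T : ℕ × ℕ → ℕ) : ℕ × ℕ → ℕ :=
  if i ∈ Des a α β T then
    (if IsSIT α β (swapEntries i T) then swapEntries i T else fun _ => 0)
  else T

/-- the fundamental quasisymmetric function `F_{comp(D)}` for `D ⊆ {1,…,N-1}`, as a power
series in the variables `x_1, x_2, …` (variable `x_n` is `X n`; `x_0` is unused) -/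
noncomputable def Fund (N : ℕ) (D : Finset ℕ) : MvPowerSeries ℕ ℚ :=
  fun d => (Nat.card {f : Fin N → ℕ //
    (∀ j, 1 ≤ f j) ∧
    (∀ j k : Fin N, j ≤ k → f j ≤ f k) ∧
    (∀ (j : ℕ) (_ : 1 ≤ j) (h2 : j < N), j ∈ D → f ⟨j - 1, by omega⟩ < f ⟨j, h2⟩) ∧
    (∑ j, Finsupp.single (f j) 1) = d} : ℚ)

/-- the generating function `Σ_T x^T` over all fillings of the given cells with positive
integers satisfying the predicate `P` (and equal to `0` off the given cells) -/
noncomputable def genF (cs : Finset (ℕ × ℕ)) (P : (ℕ × ℕ → ℕ) → Prop) :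
    MvPowerSeries ℕ ℚ :=
  fun d => (Nat.card {T : ℕ × ℕ → ℕ //
    (∀ c, c ∉ cs → T c = 0) ∧ (∀ c ∈ cs, 1 ≤ T c) ∧ P T ∧
    (∑ c ∈ cs, Finsupp.single (T c) 1) = d} : ℚ)

/-- complete homogeneous symmetric function `h_r` -/
noncomputable def hFun (r : ℕ) : MvPowerSeries ℕ ℚ :=
  fun d => (Nat.card {f : Fin r → ℕ //
    (∀ j, 1 ≤ f j) ∧ (∀ j k : Fin r, j ≤ k → f j ≤ f k) ∧
    (∑ j, Finsupp.single (f j) 1) = d} : ℚ)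

/-- elementary symmetric function `e_r` -/
noncomputable def eFun (r : ℕ) : MvPowerSeries ℕ ℚ :=
  fun d => (Nat.card {f : Fin r → ℕ //
    (∀ j, 1 ≤ f j) ∧ (∀ j k : Fin r, j < k → f j < f k) ∧
    (∑ j, Finsupp.single (f j) 1) = d} : ℚ)

/-- send a filling to the corresponding basis vector of the free `ℚ`-vector space on
`SIT(α/β)`, or to the zero vector if it is not a standard immaculate tableau -/
noncomputable def toBasis (α β : List ℕ) (U : ℕ × ℕ → ℕ) :
    ({T : ℕ × ℕ → ℕ // IsSIT α β T} →₀ ℚ) :=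
  if h : IsSIT α β U then Finsupp.single ⟨U, h⟩ 1 else 0

/-- the linear extension of `π_i^a` to the free `ℚ`-vector space on `SIT(α/β)` -/
noncomputable def piLin (a : Variant) (α β : List ℕ) (i : ℕ) :
    ({T : ℕ × ℕ → ℕ // IsSIT α β T} →₀ ℚ) →ₗ[ℚ]
      ({T : ℕ × ℕ → ℕ // IsSIT α β T} →₀ ℚ) :=
  Finsupp.lift _ ℚ _ (fun T => toBasis α β (piOp a α β i T.1))

/-- one step: the tableau `T` is obtained from `S` by applying one operator `π_i^a` -/
def stepRel (a : Variant) (α β : List ℕ) (S T : ℕ × ℕ → ℕ) : Prop :=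
  IsSIT α β T ∧ ∃ i, 1 ≤ i ∧ i ≤ skewSize α β - 1 ∧ piOp a α β i S = T

/-- `T` is obtained from `S` by applying a (possibly empty) sequence of operators `π_i^a`,
all intermediate results being tableaux -/
def reach (a : Variant) (α β : List ℕ) : (ℕ × ℕ → ℕ) → (ℕ × ℕ → ℕ) → Prop :=
  Relation.ReflTransGen (stepRel a α β)

/-- the number of skew cells of `α/β` strictly above row `i` other than column-1 cells -/
noncomputable def aboveCount (α β : List ℕ) (i : ℕ) : ℕ :=
  ∑ i' ∈ Finset.Ico (i + 1) α.length,
    (if i' < β.length then part α i' - part β i' else part α i' - 1)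

/-- the tableau `S^0_{α/β}`: the column-1 cells of `α/β` are filled with `1, …, ℓ(α)-ℓ(β)`
bottom to top, then the remaining cells are filled row by row, top to bottom, left to right,
with consecutive integers -/
noncomputable def S0 (α β : List ℕ) : ℕ × ℕ → ℕ :=
  fun c =>
    if InSkew α β c then
      if c.2 = 0 ∧ β.length ≤ c.1 then c.1 - β.length + 1
      else (α.length - β.length) + aboveCount α β c.1 +
        (if c.1 < β.length then c.2 - part β c.1 + 1 else c.2)
    else 0

/-- the row superstandard tableau `S^{row}_{α/β}`: rows filled left to right with `1, 2, …, N`,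
bottom row first -/
noncomputable def Srow (α β : List ℕ) : ℕ × ℕ → ℕ :=
  fun c =>
    if InSkew α β c then
      (∑ i' ∈ Finset.range c.1, (part α i' - part β i')) + (c.2 - part β c.1 + 1)
    else 0

/-- `c` is read before `c'` in the reading word (rows top to bottom, right to left in a row) -/
def readBefore (c c' : ℕ × ℕ) : Prop :=
  c'.1 < c.1 ∨ (c.1 = c'.1 ∧ c'.2 < c.2)

/-- the number of inversions of the reading word of a tableau of shape `α/β` -/
noncomputable def invNum (α β : List ℕ) (T : ℕ × ℕ → ℕ) : ℕ :=
  ((skewCells α β ×ˢ skewCells α β).filter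
    (fun p => readBefore p.1 p.2 ∧ T p.2 < T p.1)).card

/-- `φ_U(T)`: fill the cells of `β` by `U` and those of `α/β` by `T` with all entries of `T`
shifted up by `m = |β|` -/
noncomputable def phiU (α β : List ℕ) (U T : ℕ × ℕ → ℕ) : ℕ × ℕ → ℕ :=
  fun c => if InDiagram β c then U c else if InSkew α β c then T c + β.sum else 0

/-- restriction `T_{≤ m}` of `T` to entries `≤ m` -/
def restrLe (m : ℕ) (T : ℕ × ℕ → ℕ) : ℕ × ℕ → ℕ :=
  fun c => if T c ≤ m then T c else 0

/-- restriction `T_{> m}` of `T` to entries `> m` -/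
def restrGt (m : ℕ) (T : ℕ × ℕ → ℕ) : ℕ × ℕ → ℕ :=
  fun c => if m < T c then T c else 0

/-- standardisation `std(T_{>m})`: keep the entries `> m` and subtract `m` from each -/
def stdGt (m : ℕ) (T : ℕ × ℕ → ℕ) : ℕ × ℕ → ℕ :=
  fun c => if m < T c then T c - m else 0

/-- `T ∈ X_{α,β}`: `T ∈ SIT(α)` and the entries `> |β|` of `T` occupy exactly the cells
of `α/β` -/
def memX (α β : List ℕ) (T : ℕ × ℕ → ℕ) : Prop :=
  IsSIT α [] T ∧ ∀ c, InDiagram α c → (β.sum < T c ↔ ¬ InDiagram β c)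

/-!
A standard immaculate tableau `T` and a weakly increasing positive sequence `f` that increases
strictly across the `A*`-descents of `T` give the filling `W` whose cell labelled `k` holds
`f (k - 1)`; it has weakly increasing rows and first column. Conversely `W` determines `T` as
its standardization: number the cells by increasing value, breaking ties first by row and then
by column. This inverts the construction because between two equal values of `f` there is no
`A*`-descent, so the rows of consecutive labels weakly increase there. The coefficient of
`x^d` on either side counts the pairs, respectively the fillings, of weight `d`.
-/

open Finset

section Cells

variable {α β : List ℕ}

lemma part_le_sum (γ : List ℕ) (i : ℕ) : part γ i ≤ γ.sum := by
  unfold part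
  rcases lt_or_ge i γ.length with h | h
  · rw [List.getD_eq_getElem _ _ h]
    exact List.le_sum_of_mem (List.getElem_mem h)
  · rw [List.getD_eq_default _ _ h]
    exact Nat.zero_le _

lemma sum_range_part (γ : List ℕ) : ∑ i ∈ range γ.length, part γ i = γ.sum := by
  rw [Finset.sum_range, ← Fin.sum_univ_getElem]
  simp [part]

lemma mem_skewCells {c : ℕ × ℕ} : c ∈ skewCells α β ↔ InSkew α β c := by
  simp only [skewCells, mem_filter, mem_product, mem_range, and_iff_right_iff_imp]
  exact fun h => ⟨h.1.1, h.1.2.trans_le ((part_le_sum α c.1).trans (Nat.le_succ _))⟩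

lemma card_filter_inDiagram {γ : List ℕ} {m n : ℕ} (hm : γ.length ≤ m)
    (hn : ∀ i, part γ i < n) : #{c ∈ range m ×ˢ range n | InDiagram γ c} = γ.sum := by
  have hrows : {c ∈ range m ×ˢ range n | InDiagram γ c}
      = ((range γ.length).sigma fun i => range (part γ i)).map
          (Equiv.sigmaEquivProd ℕ ℕ).toEmbedding := by
    ext ⟨i, j⟩
    rw [mem_filter]
    simp only [mem_product, mem_range, InDiagram, mem_map, mem_sigma, Equiv.coe_toEmbedding]
    constructor
    · rintro ⟨-, hi, hj⟩
      exact ⟨⟨i, j⟩, ⟨hi, hj⟩, rfl⟩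
    · rintro ⟨⟨i', j'⟩, ⟨hi, hj⟩, h⟩
      simp only [Equiv.sigmaEquivProd_apply, Prod.mk.injEq] at h
      obtain ⟨rfl, rfl⟩ := h
      exact ⟨⟨hi.trans_le hm, (hj.trans (hn i'))⟩, hi, hj⟩
  rw [hrows, card_map, card_sigma]
  simp only [card_range, sum_range_part]

lemma SubComp.inDiagram (hsub : SubComp β α) {c : ℕ × ℕ} (hc : InDiagram β c) :
    InDiagram α c :=
  ⟨hc.1.trans_le hsub.1, hc.2.trans_le (hsub.2 c.1 hc.1)⟩

lemma SubComp.sum_le (hsub : SubComp β α) : β.sum ≤ α.sum :=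
  calc β.sum = ∑ i ∈ range β.length, part β i := (sum_range_part β).symm
    _ ≤ ∑ i ∈ range β.length, part α i := sum_le_sum fun i hi => hsub.2 i (mem_range.1 hi)
    _ ≤ ∑ i ∈ range α.length, part α i := sum_le_sum_of_subset (range_subset_range.2 hsub.1)
    _ = α.sum := sum_range_part α

lemma card_skewCells (hsub : SubComp β α) : #(skewCells α β) = skewSize α β := by
  set box := range α.length ×ˢ range (α.sum + 1)
  have hsdiff : skewCells α β = {c ∈ box | InDiagram α c} \ {c ∈ box | InDiagram β c} := by
    ext c
    simp only [skewCells, InSkew, mem_filter, mem_sdiff, box]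
    tauto
  have hsubset : {c ∈ box | InDiagram β c} ⊆ {c ∈ box | InDiagram α c} :=
    monotone_filter_right _ fun _ _ => hsub.inDiagram
  have hlt : ∀ γ : List ℕ, γ.sum ≤ α.sum → ∀ i, part γ i < α.sum + 1 :=
    fun γ hγ i => Nat.lt_succ_of_le ((part_le_sum γ i).trans hγ)
  rw [hsdiff, card_sdiff_of_subset hsubset, card_filter_inDiagram le_rfl (hlt α le_rfl),
    card_filter_inDiagram hsub.1 (hlt β hsub.sum_le)]
  rfl

end Cells

section Standard

variable {α β : List ℕ} {T : ℕ × ℕ → ℕ} {n : ℕ}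

lemma IsStdOn.eq_card_lt_add_one (hT : IsStdOn α β (Icc 1 n) T) {c : ℕ × ℕ}
    (hc : InSkew α β c) : T c = #{c' ∈ skewCells α β | T c' < T c} + 1 := by
  have hTc := mem_Icc.1 (hT.mem c hc)
  have hbij : #{c' ∈ skewCells α β | T c' < T c} = #(Ico 1 (T c)) := by
    refine card_bij (fun c' _ => T c') (fun c' hc' => ?_) (fun c₁ h₁ c₂ h₂ h => ?_)
      (fun v hv => ?_)
    · rw [mem_filter, mem_skewCells] at hc'
      exact mem_Ico.2 ⟨(mem_Icc.1 (hT.mem c' hc'.1)).1, hc'.2⟩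
    · exact hT.inj c₁ c₂ (mem_skewCells.1 (mem_filter.1 h₁).1)
        (mem_skewCells.1 (mem_filter.1 h₂).1) h
    · obtain ⟨hv1, hv2⟩ := mem_Ico.1 hv
      obtain ⟨c', hc', rfl⟩ := hT.surj v (mem_Icc.2 ⟨hv1, by omega⟩)
      exact ⟨c', mem_filter.2 ⟨mem_skewCells.2 hc', hv2⟩, rfl⟩
  rw [hbij, Nat.card_Ico]
  omega

lemma IsStdOn.exists_eq_add_one (hT : IsStdOn α β (Icc 1 n) T) (j : Fin n) :
    ∃ c, InSkew α β c ∧ T c = j + 1 :=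
  hT.surj _ (mem_Icc.2 ⟨by omega, j.isLt⟩)

instance finite_isSIT (α β : List ℕ) : Finite {T // IsSIT α β T} := by
  let restrict (T : {T // IsSIT α β T}) (c : skewCells α β) : Fin (skewSize α β + 1) :=
    ⟨T.1 c, Nat.lt_succ_of_le (mem_Icc.1 (T.2.1.mem c (mem_skewCells.1 c.2))).2⟩
  have hinj : Function.Injective restrict := fun T U h => Subtype.ext <| funext fun c => by
    by_cases hc : InSkew α β c
    · simpa [restrict] using congrFun h ⟨c, mem_skewCells.2 hc⟩
    · rw [T.2.1.zero_off c hc, U.2.1.zero_off c hc]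
  exact Finite.of_injective restrict hinj

end Standard

section Standardization

variable {α β : List ℕ} {W T : ℕ × ℕ → ℕ}

def cellKey (W : ℕ × ℕ → ℕ) (c : ℕ × ℕ) : ℕ ×ₗ (ℕ ×ₗ ℕ) := toLex (W c, toLex c)

lemma cellKey_injective (W : ℕ × ℕ → ℕ) : Function.Injective (cellKey W) := fun c c' h => by
  simpa [cellKey] using congrArg (fun k => (ofLex k).2) h

lemma cellKey_lt_cellKey {c c' : ℕ × ℕ} : cellKey W c < cellKey W c' ↔
    W c < W c' ∨ W c = W c' ∧ (c.1 < c'.1 ∨ c.1 = c'.1 ∧ c.2 < c'.2) := by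
  simp only [cellKey, Prod.Lex.toLex_lt_toLex]

def Standardizes (α β : List ℕ) (W T : ℕ × ℕ → ℕ) : Prop :=
  ∀ c c', InSkew α β c → InSkew α β c' → (T c < T c' ↔ cellKey W c < cellKey W c')

lemma Standardizes.eq_of_eq (h : Standardizes α β W T) {c c' : ℕ × ℕ} (hc : InSkew α β c)
    (hc' : InSkew α β c') (heq : T c = T c') : c = c' := by
  rcases lt_trichotomy (cellKey W c) (cellKey W c') with hlt | hkey | hgt
  · exact absurd ((h c c' hc hc').2 hlt) heq.not_lt
  · exact cellKey_injective W hkey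
  · exact absurd ((h c' c hc' hc).2 hgt) heq.not_gt

lemma standardizes_of_lt_imp (hT : ∀ c c', InSkew α β c → InSkew α β c' → T c = T c' → c = c')
    (h : ∀ c c', InSkew α β c → InSkew α β c' → T c < T c' → cellKey W c < cellKey W c') :
    Standardizes α β W T := by
  refine fun c c' hc hc' => ⟨h c c' hc hc', fun hkey => ?_⟩
  rcases lt_trichotomy (T c) (T c') with hlt | heq | hgt
  · exact hlt
  · exact absurd (congrArg (cellKey W) (hT c c' hc hc' heq)) hkey.ne
  · exact absurd (h c' c hc' hc hgt) (lt_asymm hkey)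

noncomputable def standardize (α β : List ℕ) (W : ℕ × ℕ → ℕ) : ℕ × ℕ → ℕ := fun c =>
  if InSkew α β c then #{c' ∈ skewCells α β | cellKey W c' < cellKey W c} + 1 else 0

lemma standardizes_standardize (α β : List ℕ) (W : ℕ × ℕ → ℕ) :
    Standardizes α β W (standardize α β W) := by
  have hmono : ∀ {c c'}, cellKey W c ≤ cellKey W c' →
      #{c'' ∈ skewCells α β | cellKey W c'' < cellKey W c}
        ≤ #{c'' ∈ skewCells α β | cellKey W c'' < cellKey W c'} :=
    fun hle => card_le_card (monotone_filter_right _ fun _ _ h => h.trans_le hle)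
  intro c c' hc hc'
  simp only [standardize, if_pos hc, if_pos hc', add_lt_add_iff_right]
  refine ⟨fun hcard => lt_of_not_ge fun hle => (hmono hle).not_gt hcard, fun hlt => ?_⟩
  refine card_lt_card (ssubset_iff_of_subset
    (monotone_filter_right _ fun _ _ h => h.trans hlt) |>.2 ⟨c, ?_, ?_⟩)
  · exact mem_filter.2 ⟨mem_skewCells.2 hc, hlt⟩
  · exact fun hmem => lt_irrefl _ (mem_filter.1 hmem).2

lemma isStdOn_standardize (hsub : SubComp β α) (W : ℕ × ℕ → ℕ) :
    IsStdOn α β (Icc 1 (skewSize α β)) (standardize α β W) := by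
  have hinj : ∀ c c', InSkew α β c → InSkew α β c' →
      standardize α β W c = standardize α β W c' → c = c' :=
    fun _ _ => (standardizes_standardize α β W).eq_of_eq
  have hmem : ∀ c, InSkew α β c → standardize α β W c ∈ Icc 1 (skewSize α β) := by
    intro c hc
    have hlt : #{c' ∈ skewCells α β | cellKey W c' < cellKey W c} < #(skewCells α β) :=
      card_lt_card (filter_ssubset.2 ⟨c, mem_skewCells.2 hc, lt_irrefl _⟩)
    rw [card_skewCells hsub] at hlt
    simp only [standardize, if_pos hc, mem_Icc]
    omega
  refine ⟨fun c hc => if_neg hc, hmem, hinj, fun v hv => ?_⟩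
  obtain ⟨c, hc, hcv⟩ := surjOn_of_injOn_of_card_le (standardize α β W)
    (fun c hc => hmem c (mem_skewCells.1 hc))
    (fun c hc c' hc' => hinj c c' (mem_skewCells.1 hc) (mem_skewCells.1 hc'))
    (by rw [card_skewCells hsub, Nat.card_Icc, Nat.add_sub_cancel]) hv
  exact ⟨c, mem_skewCells.1 hc, hcv⟩

lemma Standardizes.eq_standardize {n : ℕ} (hT : IsStdOn α β (Icc 1 n) T)
    (h : Standardizes α β W T) : T = standardize α β W := by
  funext c
  by_cases hc : InSkew α β c
  · rw [hT.eq_card_lt_add_one hc, standardize, if_pos hc]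
    congr 2
    exact filter_congr fun c' hc' => h c' c (mem_skewCells.1 hc') hc
  · rw [hT.zero_off c hc, standardize, if_neg hc]

lemma Standardizes.isSIT (hT : IsStdOn α β (Icc 1 (skewSize α β)) T)
    (h : Standardizes α β W T) (hcol : FirstColWeak α β W) (hrow : RowsWeak α β W) :
    IsSIT α β T := by
  refine ⟨hT, fun i j j' hj hc hc' => ?_, fun i i' hi hc hc' => ?_⟩
  · refine (h _ _ hc hc').2 (cellKey_lt_cellKey.2 ?_)
    rcases (hrow i j j' hj hc hc').lt_or_eq with hlt | heq
    exacts [Or.inl hlt, Or.inr ⟨heq, Or.inr ⟨rfl, hj⟩⟩]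
  · refine (h _ _ hc hc').2 (cellKey_lt_cellKey.2 ?_)
    rcases (hcol i i' hi hc hc').lt_or_eq with hlt | heq
    exacts [Or.inl hlt, Or.inr ⟨heq, Or.inl hi⟩]

end Standardization

section Fund

variable {N : ℕ}

def IsFundSeq (N : ℕ) (D : Finset ℕ) (f : Fin N → ℕ) : Prop :=
  (∀ j, 1 ≤ f j) ∧ Monotone f ∧
    ∀ (j : ℕ) (_ : 1 ≤ j) (h2 : j < N), j ∈ D → f ⟨j - 1, by omega⟩ < f ⟨j, h2⟩

def FundTerms (N : ℕ) (D : Finset ℕ) (d : ℕ →₀ ℕ) : Type :=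
  {f : Fin N → ℕ // IsFundSeq N D f ∧ ∑ j, Finsupp.single (f j) 1 = d}

lemma fund_apply (D : Finset ℕ) (d : ℕ →₀ ℕ) : Fund N D d = Nat.card (FundTerms N D d) :=
  congrArg _ <| Nat.card_congr <| Equiv.subtypeEquivRight fun _ =>
    ⟨fun ⟨hpos, hmono, hdes, hd⟩ => ⟨⟨hpos, hmono, hdes⟩, hd⟩,
      fun ⟨⟨hpos, hmono, hdes⟩, hd⟩ => ⟨hpos, hmono, hdes, hd⟩⟩

lemma mem_support_of_sum_single_eq {ι : Type*} [Fintype ι] {f : ι → ℕ} {d : ℕ →₀ ℕ}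
    (hd : ∑ j, Finsupp.single (f j) 1 = d) (j : ι) : f j ∈ d.support := by
  subst hd
  rw [Finsupp.mem_support_iff, Finsupp.finsetSum_apply]
  exact (sum_pos' (fun _ _ => Nat.zero_le _) ⟨j, mem_univ j, by simp⟩).ne'

instance (D : Finset ℕ) (d : ℕ →₀ ℕ) : Finite (FundTerms N D d) :=
  Finite.of_injective (fun f j => (⟨f.1 j, mem_support_of_sum_single_eq f.2.2 j⟩ : d.support))
    fun _ _ h => Subtype.ext <| funext fun j => congrArg Subtype.val (congrFun h j)

end Fund

section FillBy

variable {α β : List ℕ} {T : ℕ × ℕ → ℕ} {N : ℕ} {f : Fin N → ℕ} {c c' : ℕ × ℕ}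

def fillBy (f : Fin N → ℕ) (T : ℕ × ℕ → ℕ) : ℕ × ℕ → ℕ := fun c =>
  if h : 0 < T c ∧ T c ≤ N then f ⟨T c - 1, by omega⟩ else 0

lemma fillBy_eq (f : Fin N → ℕ) {j : Fin N} (h : T c = j + 1) : fillBy f T c = f j := by
  rw [fillBy, dif_pos (by omega)]
  exact congrArg f (Fin.ext (by simp only; omega))

lemma fillBy_of_not_inSkew {E : Finset ℕ} (hT : IsStdOn α β E T) (f : Fin N → ℕ)
    (hc : ¬ InSkew α β c) : fillBy f T c = 0 := by
  simp [fillBy, hT.zero_off c hc]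

lemma IsStdOn.exists_fin (hT : IsStdOn α β (Icc 1 N) T) (hc : InSkew α β c) :
    ∃ j : Fin N, T c = j + 1 := by
  have := mem_Icc.1 (hT.mem c hc)
  exact ⟨⟨T c - 1, by omega⟩, by simp only; omega⟩

lemma fillBy_le_fillBy (hT : IsStdOn α β (Icc 1 N) T) (hf : Monotone f) (hc : InSkew α β c)
    (hc' : InSkew α β c') (h : T c ≤ T c') : fillBy f T c ≤ fillBy f T c' := by
  obtain ⟨j, hj⟩ := hT.exists_fin hc
  obtain ⟨j', hj'⟩ := hT.exists_fin hc'
  rw [fillBy_eq f hj, fillBy_eq f hj']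
  exact hf (Fin.le_def.2 (by omega))

lemma fillBy_lt_fillBy_of_mem {D : Finset ℕ} (hf : IsFundSeq N D f) {k : ℕ} (hkD : k ∈ D)
    (hk1 : 1 ≤ k) (hkN : k < N) (hc : T c = k) (hc' : T c' = k + 1) :
    fillBy f T c < fillBy f T c' := by
  rw [fillBy_eq f (j := ⟨k - 1, by omega⟩) (by simp only; omega),
    fillBy_eq f (j := ⟨k, hkN⟩) hc']
  exact hf.2.2 k hk1 hkN hkD

lemma sum_fillBy {M : Type*} [AddCommMonoid M] (hT : IsStdOn α β (Icc 1 N) T)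
    (f : Fin N → ℕ) (g : ℕ → M) :
    ∑ c ∈ skewCells α β, g (fillBy f T c) = ∑ j, g (f j) := by
  have hlabel : ∀ c ∈ skewCells α β, T c - 1 < N ∧ T c = T c - 1 + 1 := fun c hc => by
    have := mem_Icc.1 (hT.mem c (mem_skewCells.1 hc))
    omega
  refine sum_bij (fun c hc => ⟨T c - 1, (hlabel c hc).1⟩) (fun _ _ => mem_univ _)
    (fun c hc c' hc' h => ?_) (fun j _ => ?_)
    (fun c hc => congrArg g (fillBy_eq f (hlabel c hc).2))
  · have h₁ := (hlabel c hc).2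
    have h₂ := (hlabel c' hc').2
    have h₃ := Fin.mk.inj_iff.1 h
    exact hT.inj c c' (mem_skewCells.1 hc) (mem_skewCells.1 hc') (by omega)
  · obtain ⟨c, hc, hcj⟩ := hT.exists_eq_add_one j
    exact ⟨c, mem_skewCells.2 hc, Fin.ext (by simp only [hcj]; omega)⟩

end FillBy

section Descents

variable {α β : List ℕ} {T : ℕ × ℕ → ℕ} {f : Fin (skewSize α β) → ℕ} {c c' : ℕ × ℕ}

lemma firstColWeak_fillBy (hT : IsSIT α β T) (hf : Monotone f) :
    FirstColWeak α β (fillBy f T) := fun i i' hi hc hc' =>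
  fillBy_le_fillBy hT.1 hf hc hc' (hT.2.2 i i' hi hc hc').le

lemma rowsWeak_fillBy (hT : IsSIT α β T) (hf : Monotone f) :
    RowsWeak α β (fillBy f T) := fun i j j' hj hc hc' =>
  fillBy_le_fillBy hT.1 hf hc hc' (hT.2.1 i j j' hj hc hc').le

/-- Within a run of equal values of `fillBy f T`, the labels contain no `A*`-descent, so their
rows weakly increase. -/
lemma row_le_row_of_fillBy_eq (hT : IsSIT α β T)
    (hf : IsFundSeq (skewSize α β) (Des .Astar α β T) f) (hc : InSkew α β c)
    (hc' : InSkew α β c') (hle : T c ≤ T c') (heq : fillBy f T c = fillBy f T c') :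
    c.1 ≤ c'.1 := by
  suffices ∀ n, T c ≤ n → ∀ c', InSkew α β c' → T c' = n →
      fillBy f T c' = fillBy f T c → c.1 ≤ c'.1 from this _ hle c' hc' rfl heq.symm
  intro n hn
  induction n, hn using Nat.le_induction with
  | base => intro c' hc' h _; rw [hT.1.inj c c' hc hc' h.symm]
  | succ n hn ih =>
    intro c' hc' hTc' heq'
    have hTc := mem_Icc.1 (hT.1.mem c hc)
    have hN := (mem_Icc.1 (hT.1.mem c' hc')).2
    obtain ⟨c'', hc'', hTc''⟩ := hT.1.surj n (mem_Icc.2 ⟨by omega, by omega⟩)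
    have hmid : fillBy f T c'' = fillBy f T c :=
      le_antisymm (heq' ▸ fillBy_le_fillBy hT.1 hf.2.1 hc'' hc' (by omega))
        (fillBy_le_fillBy hT.1 hf.2.1 hc hc'' (by omega))
    refine (ih c'' hc'' hTc'' hmid).trans (not_lt.1 fun hlt => ?_)
    have hdes : n ∈ Des .Astar α β T :=
      mem_filter.2 ⟨mem_Icc.2 ⟨by omega, by omega⟩, c'', c', hc'', hc', hTc'', hTc', hlt⟩
    have := fillBy_lt_fillBy_of_mem hf hdes (by omega) (by omega) hTc'' hTc'
    omega

lemma standardizes_fillBy (hT : IsSIT α β T)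
    (hf : IsFundSeq (skewSize α β) (Des .Astar α β T) f) :
    Standardizes α β (fillBy f T) T := by
  refine standardizes_of_lt_imp hT.1.inj fun ⟨i, j⟩ ⟨i', j'⟩ hc hc' hlt =>
    cellKey_lt_cellKey.2 ?_
  rcases (fillBy_le_fillBy hT.1 hf.2.1 hc hc' hlt.le).lt_or_eq with hval | hval
  · exact Or.inl hval
  refine Or.inr ⟨hval, ?_⟩
  rcases (row_le_row_of_fillBy_eq hT hf hc hc' hlt.le hval).lt_or_eq with hrow | hrow
  · exact Or.inl hrow
  obtain rfl : i = i' := hrow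
  refine Or.inr ⟨rfl, lt_of_not_ge fun hcol => ?_⟩
  rcases hcol.lt_or_eq with hcol | rfl
  · exact (hT.2.1 i j' j hcol hc' hc).not_gt hlt
  · exact hlt.ne rfl

lemma exists_isFundSeq_fillBy_eq {W : ℕ × ℕ → ℕ} (hT : IsSIT α β T) (h : Standardizes α β W T)
    (hW0 : ∀ c, ¬ InSkew α β c → W c = 0) (hW1 : ∀ c, InSkew α β c → 1 ≤ W c) :
    ∃ f, IsFundSeq (skewSize α β) (Des .Astar α β T) f ∧ fillBy f T = W := by
  choose cell hcell hTcell using hT.1.exists_eq_add_one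
  have hW : ∀ {c} {j : Fin (skewSize α β)}, InSkew α β c → T c = j + 1 → W (cell j) = W c :=
    fun hc hj => congrArg W (hT.1.inj _ _ (hcell _) hc (by rw [hTcell, hj]))
  refine ⟨fun j => W (cell j),
    ⟨fun j => hW1 _ (hcell j), fun j k hjk => ?_, fun k h1 h2 hk => ?_⟩, funext fun c => ?_⟩
  · rcases hjk.lt_or_eq with hlt | rfl
    · have hkey := (h _ _ (hcell j) (hcell k)).1 (by rw [hTcell, hTcell]; simpa using hlt)
      rcases cellKey_lt_cellKey.1 hkey with hval | ⟨hval, -⟩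
      exacts [hval.le, hval.le]
    · exact le_rfl
  · obtain ⟨-, c, c', hc, hc', hTc, hTc', hrow : c'.1 < c.1⟩ := mem_filter.1 hk
    beta_reduce
    rw [hW hc (by rw [Fin.val_mk]; omega), hW hc' hTc']
    rcases cellKey_lt_cellKey.1 ((h c c' hc hc').1 (by omega)) with hval | ⟨-, hr | ⟨hr, -⟩⟩
    · exact hval
    all_goals omega
  · by_cases hc : InSkew α β c
    · obtain ⟨j, hj⟩ := hT.1.exists_fin hc
      rw [fillBy_eq _ hj, hW hc hj]
    · rw [fillBy_of_not_inSkew hT.1 _ hc, hW0 c hc]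

lemma eq_of_fillBy_eq {T' : ℕ × ℕ → ℕ} {f' : Fin (skewSize α β) → ℕ} (hT : IsSIT α β T)
    (hT' : IsSIT α β T') (hf : IsFundSeq (skewSize α β) (Des .Astar α β T) f)
    (hf' : IsFundSeq (skewSize α β) (Des .Astar α β T') f') (h : fillBy f T = fillBy f' T') :
    T = T' ∧ f = f' := by
  obtain rfl : T = T' := by
    rw [(standardizes_fillBy hT hf).eq_standardize hT.1,
      (standardizes_fillBy hT' hf').eq_standardize hT'.1, h]
  refine ⟨rfl, funext fun j => ?_⟩
  obtain ⟨c, -, hc⟩ := hT.1.exists_eq_add_one j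
  rw [← fillBy_eq f hc, ← fillBy_eq f' hc, h]

lemma exists_fillBy_eq (hsub : SubComp β α) {W : ℕ × ℕ → ℕ}
    (hW0 : ∀ c, ¬ InSkew α β c → W c = 0) (hW1 : ∀ c, InSkew α β c → 1 ≤ W c)
    (hcol : FirstColWeak α β W) (hrow : RowsWeak α β W) :
    ∃ T f, IsSIT α β T ∧ IsFundSeq (skewSize α β) (Des .Astar α β T) f ∧ fillBy f T = W := by
  have hT := (standardizes_standardize α β W).isSIT (isStdOn_standardize hsub W) hcol hrow
  obtain ⟨f, hf, hfill⟩ := exists_isFundSeq_fillBy_eq hT (standardizes_standardize α β W) hW0 hW1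
  exact ⟨_, f, hT, hf, hfill⟩

end Descents

lemma card_sigma_fundTerms {α β : List ℕ} (hsub : SubComp β α) (d : ℕ →₀ ℕ) :
    Nat.card (Σ T : {T // IsSIT α β T}, FundTerms (skewSize α β) (Des .Astar α β T.1) d) =
      Nat.card {W : ℕ × ℕ → ℕ // (∀ c, c ∉ skewCells α β → W c = 0) ∧
        (∀ c ∈ skewCells α β, 1 ≤ W c) ∧ (FirstColWeak α β W ∧ RowsWeak α β W) ∧
        ∑ c ∈ skewCells α β, Finsupp.single (W c) 1 = d} := by
  refine Nat.card_congr (Equiv.ofBijective (fun ⟨⟨T, hT⟩, f, hf, hd⟩ => ⟨fillBy f T,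
    fun c hc => fillBy_of_not_inSkew hT.1 f (hc ∘ mem_skewCells.2),
    fun c hc => ?_, ⟨firstColWeak_fillBy hT hf.2.1, rowsWeak_fillBy hT hf.2.1⟩,
    (sum_fillBy hT.1 f (Finsupp.single · 1)).trans hd⟩) ⟨?_, ?_⟩)
  · obtain ⟨j, hj⟩ := hT.1.exists_fin (mem_skewCells.1 hc)
    exact (fillBy_eq f hj).symm ▸ hf.1 j
  · intro ⟨⟨T, hT⟩, f, hf, _⟩ ⟨⟨T', hT'⟩, f', hf', _⟩ h
    obtain ⟨rfl, rfl⟩ := eq_of_fillBy_eq hT hT' hf hf' (congrArg Subtype.val h)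
    rfl
  · rintro ⟨W, hW0, hW1, ⟨hcol, hrow⟩, hd⟩
    obtain ⟨T, f, hT, hf, rfl⟩ := exists_fillBy_eq hsub
      (fun c hc => hW0 c (hc ∘ mem_skewCells.1)) (fun c hc => hW1 c (mem_skewCells.2 hc)) hcol hrow
    exact ⟨⟨⟨T, hT⟩, f, hf, (sum_fillBy hT.1 f (Finsupp.single · 1)).symm.trans hd⟩, rfl⟩

theorem skew_Astar_generating_function_general (α β : List ℕ)
    (hsub : SubComp β α) :
    (∑ᶠ (T : ℕ × ℕ → ℕ) (_ : IsSIT α β T), Fund (skewSize α β) (Des .Astar α β T)) =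
      genF (skewCells α β) (fun T => FirstColWeak α β T ∧ RowsWeak α β T) := by
  have : Fintype {T // IsSIT α β T} := .ofFinite _
  rw [← finsum_subtype_eq_finsum_cond, finsum_eq_sum_of_fintype]
  funext d
  refine (Finset.sum_apply d _ _).trans ?_
  simp only [fund_apply]
  rw [← Nat.cast_sum, ← Nat.card_sigma]
  exact congrArg _ (card_sigma_fundTerms hsub d)

/-- `Σ_{T ∈ SIT(α/β)} F_{comp(Des_{A*}(T))}` equals the generating function of
all fillings of `α/β` with column-1 entries weakly increasing bottom to top and all rows
weakly increasing left to right. -/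
theorem skew_Astar_generating_function (α β : List ℕ)
    (hα : IsComposition α) (hβ : IsComposition β) (hsub : SubComp β α)
    (hN : 1 ≤ skewSize α β) :
    (∑ᶠ (T : ℕ × ℕ → ℕ) (_ : IsSIT α β T), Fund (skewSize α β) (Des .Astar α β T)) =
      genF (skewCells α β) (fun T => FirstColWeak α β T ∧ RowsWeak α β T) :=
  skew_Astar_generating_function_general α β hsub

end ImmaculateSkew
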